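/- Let Ω be a countably infinite set and r a measure representation over Ω. If E and E' are prefix-free subsets of Ω* generating the same open set, i.e., [E]≺ = [E']≺, then Σ_{σ∈E} r(σ) = Σ_{σ∈E'} r(σ). -/

import Mathlib

open scoped ENNReal

/-- A set of finite strings is prefix-free. -/
def prefixFree {Γ : Type*} (E : Set (List Γ)) : Prop :=
  ∀ σ ∈ E, ∀ τ ∈ E, σ <+: τ → σ = τ

/-- The prefix of length `n` of an infinite sequence. -/
def pre {Γ : Type*} (α : ℕ → Γ) (n : ℕ) : List Γ := List.ofFn fun i : Fin n => α i

/-- The open set generated by a set of strings: sequences having some prefix in `S`. -/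
def cyl {Γ : Type*} (S : Set (List Γ)) : Set (ℕ → Γ) := {α | ∃ n, pre α n ∈ S}

/-- `r` is a measure representation over `Ω`: values in `[0,1]` and
`r σ = ∑_{a ∈ Ω} r (σ a)` for every string `σ`. -/
def MeasRep {Ω : Type*} (r : List Ω → ℝ) : Prop :=
  (∀ σ, 0 ≤ r σ ∧ r σ ≤ 1) ∧ ∀ σ : List Ω, HasSum (fun a : Ω => r (σ ++ [a])) (r σ)

/-!
Pass to `R = ofReal ∘ r` in `ℝ≥0∞` and show `∑_E R ≤ ∑_{E'} R` whenever `[E]≺ ⊆ [E']≺` and `E` is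
prefix-free. Let `ν τ = ∑_{ρ ∈ E'} R([τ] ∩ [ρ])`; like `R` it satisfies `ν τ = ∑_a ν (τa)`. For
`σ ∈ E` every branch through `σ` enters `[E']≺`, beyond which `ν ≥ R`, so a König-type argument
gives `R σ ≤ ν σ`. Kraft's inequality for `ν` over the prefix-free `E` then gives
`∑_E R ≤ ∑_E ν ≤ ν [] = ∑_{E'} R`.
-/

section Strings

variable {Γ : Type*}

theorem List.exists_append_singleton_prefix {τ σ : List Γ} (h : τ <+: σ) (hne : τ ≠ σ) :
    ∃ b, τ ++ [b] <+: σ := by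
  obtain ⟨_ | ⟨b, t⟩, rfl⟩ := h
  · exact absurd (List.append_nil τ).symm hne
  · exact ⟨b, t, by simp⟩

theorem List.append_singleton_prefix_iff {τ σ : List Γ} {a b : Γ} (hb : τ ++ [b] <+: σ) :
    τ ++ [a] <+: σ ↔ a = b := by
  refine ⟨fun ha => ?_, fun hab => hab ▸ hb⟩
  have : τ ++ [a] <+: τ ++ [b] := List.prefix_of_prefix_length_le ha hb (by simp)
  simpa using this

open Classical in
theorem tsum_ite_append_singleton_prefix {τ σ : List Γ} (h : τ <+: σ) (hne : τ ≠ σ) (x : ℝ≥0∞) :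
    ∑' a, (if τ ++ [a] <+: σ then x else 0) = x := by
  obtain ⟨b, hb⟩ := List.exists_append_singleton_prefix h hne
  simp_rw [List.append_singleton_prefix_iff hb]
  exact tsum_ite_eq b (fun _ => x)

theorem pre_prefix_pre (α : ℕ → Γ) {m n : ℕ} (h : m ≤ n) : pre α m <+: pre α n := by
  rw [List.prefix_iff_eq_take]
  apply List.ext_getElem <;> simp [pre, h]

theorem prefixFree.mono {S T : Set (List Γ)} (hT : prefixFree T) (h : S ⊆ T) : prefixFree S :=
  fun σ hσ τ hτ => hT σ (h hσ) τ (h hτ)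

theorem sum_le_of_prefixFree {ν : List Γ → ℝ≥0∞} (hν : ∀ τ, ∑' a, ν (τ ++ [a]) ≤ ν τ)
    (n : ℕ) (τ : List Γ) (F : Finset (List Γ)) (hF : prefixFree (F : Set (List Γ)))
    (hext : ∀ σ ∈ F, τ <+: σ ∧ σ.length ≤ τ.length + n) :
    ∑ σ ∈ F, ν σ ≤ ν τ := by
  classical
  induction n generalizing τ F with
  | zero =>
    have hsub : F ⊆ {τ} := fun σ hσ => Finset.mem_singleton.2
      ((hext σ hσ).1.eq_of_length_le (by simpa using (hext σ hσ).2)).symm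
    exact (Finset.sum_le_sum_of_subset hsub).trans_eq (Finset.sum_singleton ν τ)
  | succ n ih =>
    by_cases hτ : τ ∈ F
    · have hsub : F ⊆ {τ} := fun σ hσ =>
        Finset.mem_singleton.2 (hF τ hτ σ hσ (hext σ hσ).1).symm
      exact (Finset.sum_le_sum_of_subset hsub).trans_eq (Finset.sum_singleton ν τ)
    have hsplit : ∀ σ ∈ F, ν σ = ∑' a, if τ ++ [a] <+: σ then ν σ else 0 := fun σ hσ =>
      (tsum_ite_append_singleton_prefix (hext σ hσ).1 (ne_of_mem_of_not_mem hσ hτ).symm _).symm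
    calc ∑ σ ∈ F, ν σ = ∑' a, ∑ σ ∈ F with τ ++ [a] <+: σ, ν σ := by
          rw [Finset.sum_congr rfl hsplit,
            ← Summable.tsum_finsetSum fun _ _ => ENNReal.summable]
          simp_rw [Finset.sum_filter]
      _ ≤ ∑' a, ν (τ ++ [a]) := by
          refine ENNReal.tsum_le_tsum fun a =>
            ih _ _ (hF.mono (Finset.coe_subset.2 (Finset.filter_subset _ _))) fun σ hσ => ?_
          rw [Finset.mem_filter] at hσ
          refine ⟨hσ.2, ?_⟩
          have := (hext σ hσ.1).2
          simp only [List.length_append, List.length_singleton]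
          omega
      _ ≤ ν τ := hν τ

theorem tsum_le_of_prefixFree {ν : List Γ → ℝ≥0∞} (hν : ∀ τ, ∑' a, ν (τ ++ [a]) ≤ ν τ)
    {S : Set (List Γ)} (hS : prefixFree S) : ∑' σ : S, ν σ ≤ ν [] := by
  refine ENNReal.summable.tsum_le_of_sum_le fun F => ?_
  refine (Finset.sum_map F (Function.Embedding.subtype _) ν).symm.trans_le <|
    sum_le_of_prefixFree hν ((F.map (Function.Embedding.subtype _)).sup List.length) [] _
      (hS.mono ?_) fun σ hσ => ⟨List.nil_prefix, ?_⟩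
  · intro σ hσ
    obtain ⟨σ, -, rfl⟩ := Finset.mem_map.1 hσ
    exact σ.2
  · simpa using Finset.le_sup (f := List.length) hσ

theorem exists_seq_of_forall_exists_append {P : List Γ → Prop}
    (step : ∀ l, P l → ∃ a, P (l ++ [a])) {τ : List Γ} (hτ : P τ) :
    ∃ α : ℕ → Γ, pre α τ.length = τ ∧ ∀ n, τ.length ≤ n → P (pre α n) := by
  obtain ⟨a₀, -⟩ := step τ hτ
  have : Nonempty Γ := ⟨a₀⟩
  choose! next hnext using step
  set g : ℕ → List Γ := fun k => (fun l => l ++ [next l])^[k] τ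
  have hg_succ : ∀ k, g (k + 1) = g k ++ [next (g k)] := fun k =>
    Function.iterate_succ_apply' _ k τ
  have hP : ∀ k, P (g k) := Function.Iterate.rec P hτ hnext
  have hlen : ∀ k, (g k).length = τ.length + k := by
    intro k
    induction k with
    | zero => rfl
    | succ k ih => rw [hg_succ, List.length_append, ih, List.length_singleton, add_assoc]
  have hmono : ∀ {j k}, j ≤ k → g j <+: g k := by
    intro j k hjk
    induction k, hjk using Nat.le_induction with
    | base => exact List.prefix_refl _
    | succ k _ ih => exact ih.trans (hg_succ k ▸ List.prefix_append _ _)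
  set α : ℕ → Γ := fun i => (g (i + 1)).getD i a₀
  have hpre : ∀ k, pre α (τ.length + k) = g k := by
    intro k
    refine List.ext_getElem (by simp [pre, hlen]) fun i _ hi => ?_
    have hi₁ : i < (g (i + 1)).length := by rw [hlen]; omega
    simp only [pre, List.getElem_ofFn, α]
    rw [List.getD_eq_getElem _ _ hi₁, (hmono (le_max_left (i + 1) k)).getElem hi₁,
      (hmono (le_max_right (i + 1) k)).getElem hi]
  refine ⟨α, hpre 0, fun n hn => ?_⟩
  obtain ⟨k, rfl⟩ := Nat.exists_eq_add_of_le hn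
  exact hpre k ▸ hP k

/- König-type argument: where `R` exceeds `ν`, it also does at some child, so otherwise there
would be a branch along which `R` exceeds `ν` forever. -/
theorem le_of_forall_seq_exists_le {ν R : List Γ → ℝ≥0∞}
    (hν : ∀ τ, ∑' a, ν (τ ++ [a]) ≤ ν τ) (hR : ∀ τ, R τ ≤ ∑' a, R (τ ++ [a])) {τ : List Γ}
    (hcov : ∀ α : ℕ → Γ, pre α τ.length = τ → ∃ n, τ.length ≤ n ∧ R (pre α n) ≤ ν (pre α n)) :
    R τ ≤ ν τ := by
  by_contra! hτ
  have step : ∀ l, ν l < R l → ∃ a, ν (l ++ [a]) < R (l ++ [a]) := by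
    intro l hl
    by_contra! h
    exact hl.not_ge <| calc
      R l ≤ ∑' a, R (l ++ [a]) := hR l
      _ ≤ ∑' a, ν (l ++ [a]) := ENNReal.tsum_le_tsum h
      _ ≤ ν l := hν l
  obtain ⟨α, hατ, hα⟩ := exists_seq_of_forall_exists_append step hτ
  obtain ⟨n, hn, hle⟩ := hcov α hατ
  exact (hα n hn).not_ge hle

/-- The `R`-mass of the intersection of the cylinders of `τ` and `ρ`: that of the longer string
if one is a prefix of the other, `0` otherwise. -/
noncomputable def interMass (R : List Γ → ℝ≥0∞) (τ ρ : List Γ) : ℝ≥0∞ :=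
  open Classical in if ρ <+: τ then R τ else if τ <+: ρ then R ρ else 0

theorem interMass_of_prefix (R : List Γ → ℝ≥0∞) {τ ρ : List Γ} (h : ρ <+: τ) :
    interMass R τ ρ = R τ :=
  if_pos h

theorem interMass_nil_left (R : List Γ → ℝ≥0∞) (ρ : List Γ) : interMass R [] ρ = R ρ := by
  by_cases h : ρ <+: []
  · obtain rfl := List.prefix_nil.1 h
    exact interMass_of_prefix R h
  · simp [interMass, h]

theorem tsum_interMass_append {R : List Γ → ℝ≥0∞} (hR : ∀ τ, ∑' a, R (τ ++ [a]) = R τ)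
    (τ ρ : List Γ) : ∑' a, interMass R (τ ++ [a]) ρ = interMass R τ ρ := by
  classical
  by_cases hρτ : ρ <+: τ
  · have hρτa : ∀ a, ρ <+: τ ++ [a] := fun a => hρτ.trans (List.prefix_append _ _)
    simp only [interMass_of_prefix R (hρτa _), interMass_of_prefix R hρτ, hR]
  by_cases hτρ : τ <+: ρ
  · have hne : τ ≠ ρ := fun h => hρτ (h ▸ List.prefix_refl _)
    have hterm : ∀ a, interMass R (τ ++ [a]) ρ = if τ ++ [a] <+: ρ then R ρ else 0 := by
      intro a
      by_cases h : ρ <+: τ ++ [a]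
      · obtain rfl : ρ = τ ++ [a] := (List.prefix_concat_iff.1 h).resolve_right hρτ
        simp [interMass]
      · simp [interMass, h]
    rw [tsum_congr hterm, tsum_ite_append_singleton_prefix hτρ hne, interMass, if_neg hρτ,
      if_pos hτρ]
  · have hterm : ∀ a, interMass R (τ ++ [a]) ρ = 0 := by
      intro a
      have h₁ : ¬ρ <+: τ ++ [a] := fun h =>
        (List.prefix_concat_iff.1 h).elim (fun e => hτρ (e ▸ List.prefix_append _ _)) hρτ
      have h₂ : ¬τ ++ [a] <+: ρ := fun h => hτρ ((List.prefix_append _ _).trans h)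
      simp [interMass, h₁, h₂]
    rw [tsum_congr hterm, tsum_zero, interMass, if_neg hρτ, if_neg hτρ]

theorem tsum_le_tsum_of_cyl_subset {R : List Γ → ℝ≥0∞} (hR : ∀ τ, ∑' a, R (τ ++ [a]) = R τ)
    {E E' : Set (List Γ)} (hE : prefixFree E) (h : cyl E ⊆ cyl E') :
    ∑' σ : E, R σ ≤ ∑' ρ : E', R ρ := by
  set ν : List Γ → ℝ≥0∞ := fun τ => ∑' ρ : E', interMass R τ ρ
  have hν : ∀ τ, ∑' a, ν (τ ++ [a]) ≤ ν τ := fun τ =>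
    ((ENNReal.tsum_comm (f := fun a (ρ : E') => interMass R (τ ++ [a]) ρ)).trans
      (tsum_congr fun ρ => tsum_interMass_append hR τ ρ)).le
  have hRν : ∀ σ ∈ E, R σ ≤ ν σ := by
    intro σ hσ
    refine le_of_forall_seq_exists_le hν (fun τ => (hR τ).ge) fun α hα => ?_
    obtain ⟨m, hm⟩ := h ⟨σ.length, hα ▸ hσ⟩
    refine ⟨max m σ.length, le_max_right _ _, ?_⟩
    calc R (pre α (max m σ.length))
        = interMass R _ (pre α m) :=
          (interMass_of_prefix R (pre_prefix_pre α (le_max_left _ _))).symm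
      _ ≤ ν _ := ENNReal.le_tsum (⟨_, hm⟩ : E')
  calc ∑' σ : E, R σ ≤ ∑' σ : E, ν σ := ENNReal.tsum_le_tsum fun σ => hRν σ σ.2
    _ ≤ ν [] := tsum_le_of_prefixFree hν hE
    _ = ∑' ρ : E', R ρ := by simp only [ν, interMass_nil_left]

end Strings

theorem stmt3_general {Ω : Type*} (r : List Ω → ℝ)
    (hr : MeasRep r) (E E' : Set (List Ω)) (hE : prefixFree E) (hE' : prefixFree E')
    (h : cyl E = cyl E') :
    ∑' σ : E, r (σ : List Ω) = ∑' σ : E', r (σ : List Ω) := by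
  set R : List Ω → ℝ≥0∞ := fun σ => ENNReal.ofReal (r σ)
  have hR : ∀ τ, ∑' a, R (τ ++ [a]) = R τ := fun τ => by
    rw [← ENNReal.ofReal_tsum_of_nonneg (fun a => (hr.1 _).1) (hr.2 τ).summable,
      (hr.2 τ).tsum_eq]
  have toReal_tsum : ∀ S : Set (List Ω), (∑' σ : S, R σ).toReal = ∑' σ : S, r σ := fun S => by
    rw [ENNReal.tsum_toReal_eq fun _ => ENNReal.ofReal_ne_top]
    exact tsum_congr fun σ => ENNReal.toReal_ofReal (hr.1 σ).1
  rw [← toReal_tsum, ← toReal_tsum,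
    le_antisymm (tsum_le_tsum_of_cyl_subset hR hE h.le) (tsum_le_tsum_of_cyl_subset hR hE' h.ge)]

/-- If `E`, `E'` are prefix-free and generate the same open set,
then `∑_{σ ∈ E} r σ = ∑_{σ ∈ E'} r σ`. -/
theorem stmt3 {Ω : Type*} [Countable Ω] [Infinite Ω] (r : List Ω → ℝ)
    (hr : MeasRep r) (E E' : Set (List Ω)) (hE : prefixFree E) (hE' : prefixFree E')
    (h : cyl E = cyl E') :
    ∑' σ : E, r (σ : List Ω) = ∑' σ : E', r (σ : List Ω) :=
  stmt3_general r hr E E' hE hE' h
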